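/- arXiv:math/0105220 — 2 statements merged into one kernel-verified Lean document; each statement's English description precedes it below -/
import Mathlib

section
/- Let h ∈ ℂ. Define R ∈ Mat₃(ℂ) ⊗ Mat₃(ℂ) by R = E₁₁⊗T + E₂₂⊗I + E₃₃⊗T⁻ + E₁₂⊗(2h·e₂) + E₂₃⊗(−2h·e₁) + E₁₃⊗(−h·h₃ + h²·e₃), where T = I + h·e₃, T⁻ = I − h·e₃, e₁ = E₁₂, e₂ = E₂₃, e₃ = E₁₃, h₃ = E₁₁ − E₃₃. Then R satisfies the quantum Yang–Baxter equation R₁₂R₁₃R₂₃ = R₂₃R₁₃R₁₂ in Mat₃(ℂ)⊗Mat₃(ℂ)⊗Mat₃(ℂ), where R₁₂ = R⊗I, R₂₃ = I⊗R, and R₁₃ acts on the first and third factors. -/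
/-!
The Jordanian matrix is `R = 1 + h r + h² s`, where `r = h₃ ∧ e₃ + 2 e₁ ∧ e₂` is a classical
`r`-matrix (`x ∧ y = x ⊗ y - y ⊗ x`) and `s = e₃ ⊗ e₃ = r² / 2`, so that `R = exp (h r)`.
The three legs of a Kronecker product `A ⊗ B` are `A ⊗ B ⊗ 1`, `A ⊗ 1 ⊗ B` and `1 ⊗ A ⊗ B`, so by
the mixed-product rule both sides of the Yang–Baxter equation expand into triple Kronecker products
of `3 × 3` matrix units, which multiply by `E i j * E k l = δ j k • E i l`. Only orders `h²` and
`h³` carry content: order `h²` is the classical Yang–Baxter equation for `r`, and every term of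
order `h⁴` and higher vanishes, because `r` and `s` raise the weight (basis vector `k` having
weight `-k`) by `2` and `4`, while the weights on `ℂ³ ⊗ ℂ³ ⊗ ℂ³` span an interval of length `6`.
-/

open Matrix Kronecker

namespace Matrix

variable {l m n p α : Type*}

theorem kronecker_neg [Ring α] (A : Matrix l m α) (B : Matrix n p α) :
    A ⊗ₖ (-B) = -(A ⊗ₖ B) := by
  ext; simp

theorem kronecker_sub [Ring α] (A : Matrix l m α) (B₁ B₂ : Matrix n p α) :
    A ⊗ₖ (B₁ - B₂) = A ⊗ₖ B₁ - A ⊗ₖ B₂ := by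
  simp only [sub_eq_add_neg, kronecker_add, kronecker_neg]

end Matrix

namespace YangBaxter

variable {n α : Type*} [DecidableEq n] [Semiring α]

def leg12 : Matrix (n × n) (n × n) α →ₗ[α] Matrix (n × n × n) (n × n × n) α where
  toFun M := of fun p q => M (p.1, p.2.1) (q.1, q.2.1) * if p.2.2 = q.2.2 then 1 else 0
  map_add' M N := by ext; simp only [of_apply, Matrix.add_apply, add_mul]
  map_smul' c M := by
    ext; simp only [of_apply, Matrix.smul_apply, smul_eq_mul, RingHom.id_apply, mul_assoc]

def leg13 : Matrix (n × n) (n × n) α →ₗ[α] Matrix (n × n × n) (n × n × n) α where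
  toFun M := of fun p q => M (p.1, p.2.2) (q.1, q.2.2) * if p.2.1 = q.2.1 then 1 else 0
  map_add' M N := by ext; simp only [of_apply, Matrix.add_apply, add_mul]
  map_smul' c M := by
    ext; simp only [of_apply, Matrix.smul_apply, smul_eq_mul, RingHom.id_apply, mul_assoc]

def leg23 : Matrix (n × n) (n × n) α →ₗ[α] Matrix (n × n × n) (n × n × n) α where
  toFun M := of fun p q => M (p.2.1, p.2.2) (q.2.1, q.2.2) * if p.1 = q.1 then 1 else 0
  map_add' M N := by ext; simp only [of_apply, Matrix.add_apply, add_mul]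
  map_smul' c M := by
    ext; simp only [of_apply, Matrix.smul_apply, smul_eq_mul, RingHom.id_apply, mul_assoc]

theorem leg12_kronecker (A B : Matrix n n α) : leg12 (A ⊗ₖ B) = A ⊗ₖ (B ⊗ₖ 1) := by
  ext; simp [leg12, one_apply]

theorem leg13_kronecker (A B : Matrix n n α) : leg13 (A ⊗ₖ B) = A ⊗ₖ (1 ⊗ₖ B) := by
  ext; simp [leg13, one_apply]

theorem leg23_kronecker (A B : Matrix n n α) : leg23 (A ⊗ₖ B) = 1 ⊗ₖ (A ⊗ₖ B) := by
  ext; simp [leg23, one_apply]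

def IsYangBaxter [Fintype n] (R : Matrix (n × n) (n × n) α) : Prop :=
  leg12 R * leg13 R * leg23 R = leg23 R * leg13 R * leg12 R

end YangBaxter

namespace Jordanian

open YangBaxter

abbrev E (i j : Fin 3) : Matrix (Fin 3) (Fin 3) ℂ := single i j 1

-- Matrix units are 0-indexed: `e₁ = E 0 1`, `e₂ = E 1 2`, `e₃ = E 0 2`, `h₃ = E 0 0 - E 2 2`.
def r : Matrix (Fin 3 × Fin 3) (Fin 3 × Fin 3) ℂ :=
  E 0 0 ⊗ₖ E 0 2 - E 2 2 ⊗ₖ E 0 2 - E 0 2 ⊗ₖ E 0 0 + E 0 2 ⊗ₖ E 2 2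
    + (2 : ℂ) • (E 0 1 ⊗ₖ E 1 2) - (2 : ℂ) • (E 1 2 ⊗ₖ E 0 1)

def s : Matrix (Fin 3 × Fin 3) (Fin 3 × Fin 3) ℂ := E 0 2 ⊗ₖ E 0 2

def R (h : ℂ) : Matrix (Fin 3 × Fin 3) (Fin 3 × Fin 3) ℂ := 1 + h • r + h ^ 2 • s

theorem R_eq_kronecker_sum (h : ℂ) :
    R h = E 0 0 ⊗ₖ (1 + h • E 0 2) + E 1 1 ⊗ₖ 1 + E 2 2 ⊗ₖ (1 - h • E 0 2)
      + E 0 1 ⊗ₖ ((2 * h) • E 1 2) + E 1 2 ⊗ₖ (-((2 * h) • E 0 1))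
      + E 0 2 ⊗ₖ (-(h • (E 0 0 - E 2 2)) + h ^ 2 • E 0 2) := by
  have hone : E 0 0 + E 1 1 + E 2 2 = 1 := by
    ext i j; fin_cases i <;> fin_cases j <;> simp [one_apply]
  calc R h = (E 0 0 + E 1 1 + E 2 2) ⊗ₖ 1 + h • r + h ^ 2 • s := by
        rw [hone, one_kronecker_one, R]
    _ = _ := by
        simp only [r, s, kronecker_add, add_kronecker, kronecker_sub, kronecker_neg, kronecker_smul]
        module

theorem isYangBaxter_R (h : ℂ) : IsYangBaxter (R h) := by
  rw [IsYangBaxter, R, ← one_kronecker_one]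
  simp only [r, s, map_add, map_sub, map_smul, leg12_kronecker, leg13_kronecker, leg23_kronecker,
    add_mul, mul_add, sub_mul, mul_sub, smul_mul_assoc, mul_smul_comm, ← mul_kronecker_mul,
    mul_one, one_mul]
  simp (disch := decide) only [single_mul_single_same, single_mul_single_of_ne, mul_one,
    kronecker_zero, zero_kronecker, smul_zero, add_zero, zero_add, sub_zero, zero_sub]
  module

end Jordanian

theorem stmt_15 (h : ℂ)
    (T T' e₁ e₂ e₃ h₃ : Matrix (Fin 3) (Fin 3) ℂ)
    (he₁ : e₁ = Matrix.single 0 1 1)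
    (he₂ : e₂ = Matrix.single 1 2 1)
    (he₃ : e₃ = Matrix.single 0 2 1)
    (hh₃ : h₃ = Matrix.single 0 0 1 - Matrix.single 2 2 1)
    (hT : T = 1 + h • e₃) (hT' : T' = 1 - h • e₃)
    (R : Matrix (Fin 3 × Fin 3) (Fin 3 × Fin 3) ℂ)
    (hR : R = Matrix.single 0 0 1 ⊗ₖ T + Matrix.single 1 1 1 ⊗ₖ (1 : Matrix (Fin 3) (Fin 3) ℂ)
        + Matrix.single 2 2 1 ⊗ₖ T'
        + Matrix.single 0 1 1 ⊗ₖ ((2 * h) • e₂)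
        + Matrix.single 1 2 1 ⊗ₖ (-((2 * h) • e₁))
        + Matrix.single 0 2 1 ⊗ₖ (-(h • h₃) + (h ^ 2) • e₃))
    (R₁₂ R₁₃ R₂₃ : Matrix (Fin 3 × Fin 3 × Fin 3) (Fin 3 × Fin 3 × Fin 3) ℂ)
    (hR₁₂ : R₁₂ = Matrix.of fun p q =>
        R (p.1, p.2.1) (q.1, q.2.1) * (if p.2.2 = q.2.2 then 1 else 0))
    (hR₁₃ : R₁₃ = Matrix.of fun p q =>
        R (p.1, p.2.2) (q.1, q.2.2) * (if p.2.1 = q.2.1 then 1 else 0))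
    (hR₂₃ : R₂₃ = Matrix.of fun p q =>
        R (p.2.1, p.2.2) (q.2.1, q.2.2) * (if p.1 = q.1 then 1 else 0)) :
    R₁₂ * R₁₃ * R₂₃ = R₂₃ * R₁₃ * R₁₂ := by
  subst he₁ he₂ he₃ hh₃ hT hT' hR hR₁₂ hR₁₃ hR₂₃
  rw [← Jordanian.R_eq_kronecker_sum]
  exact Jordanian.isYangBaxter_R h
end

section
/- Let A be an associative ℚ-algebra and let e, h ∈ A satisfy [h, e] = 2e. In A[[t]], define S = Σ_{n≥0} C(1/2, n) t^{2n} e^{2n}, H = S·h, and let G = Σ_{n≥0} (−1)ⁿ (2n)!/(4ⁿ (n!)² (2n+1)) t^{2n} e^{2n+1} (the formal arcsinh series, so that t·G = arcsinh(t·e)). Then [H, G] = 2e. -/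
/-!
Both series are images of commutative power series in `e² t²` times a power of `e`:
`S = B_{1/2}(e²t²)` and `G = g(e²t²)·e`, with `B_r` the binomial series of `(1 + X)^r`.
Since `ad h` acts on `e^k` by `2k`, bracketing with `h` multiplies the coefficient of
`t^{2n} e^{2n+1}` in `G` by `4n + 2`, which turns `g` into `2·B_{-1/2}`. As `S` commutes with `G`,
`[S h, G] = S [h, G] = 2 B_{1/2}(e²t²) B_{-1/2}(e²t²) e = 2 e`.
-/

open PowerSeries

theorem Ring.choose_eq_prod_range_div {R : Type*} [Field R] [CharZero R] (r : R) (n : ℕ) :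
    Ring.choose r n = (∏ i ∈ Finset.range n, (r - i)) / n.factorial := by
  rw [Ring.choose_eq_smul, ← Polynomial.aeval_eq_smeval, Polynomial.aeval_def,
    Polynomial.eval₂_eq_eval_map, descPochhammer_map, descPochhammer_eval_eq_prod_range,
    smul_eq_mul, inv_mul_eq_div]

theorem prod_range_neg_inv_two_sub (n : ℕ) :
    ∏ i ∈ Finset.range n, (-2⁻¹ - i : ℚ) =
      (-1) ^ n * (2 * n).factorial / (4 ^ n * n.factorial) := by
  induction n with
  | zero => simp
  | succ n ih =>
    rw [Finset.prod_range_succ, ih, Nat.mul_succ, Nat.factorial_succ, Nat.factorial_succ,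
      Nat.factorial_succ]
    push_cast
    field_simp
    ring

theorem Ring.choose_neg_half (n : ℕ) :
    Ring.choose (-2⁻¹ : ℚ) n = (-1) ^ n * (2 * n).factorial / (4 ^ n * n.factorial ^ 2) := by
  rw [Ring.choose_eq_prod_range_div, prod_range_neg_inv_two_sub]
  field_simp

theorem mul_pow_sub_pow_mul {A : Type*} [Ring A] {e h : A} (hcomm : h * e - e * h = 2 * e)
    (n : ℕ) : h * e ^ n - e ^ n * h = (2 * n : ℕ) • e ^ n := by
  induction n with
  | zero => simp
  | succ n ih =>
    calc h * e ^ (n + 1) - e ^ (n + 1) * h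
          = (h * e ^ n - e ^ n * h) * e + e ^ n * (h * e - e * h) := by noncomm_ring
      _ = (2 * n + 2 : ℕ) • e ^ (n + 1) := by
          rw [ih, hcomm, smul_mul_assoc, ← pow_succ, add_nsmul, two_nsmul, two_mul e, mul_add,
            ← pow_succ]

section
variable {R A : Type*} [CommRing R] [Ring A] [Algebra R A]

/-- `f ↦ f(e²X²)`; the detour through `R[X]` provides a commutative ring in which to rescale. -/
noncomputable def rescaleExpandTwo (e : A) : R⟦X⟧ →+* A⟦X⟧ :=
  (map (Polynomial.aeval e).toRingHom).comp <| (rescale Polynomial.X).comp <|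
    (map Polynomial.C).comp (expand 2 two_ne_zero).toRingHom

theorem coeff_rescaleExpandTwo (e : A) (f : R⟦X⟧) (m : ℕ) :
    coeff m (rescaleExpandTwo e f) = if 2 ∣ m then coeff (m / 2) f • e ^ m else 0 := by
  simp only [rescaleExpandTwo, RingHom.comp_apply, AlgHom.toRingHom_eq_coe, RingHom.coe_coe,
    coeff_map, coeff_rescale, coeff_expand]
  split_ifs <;> simp [Algebra.commutes, Algebra.smul_def]

theorem coeff_rescaleExpandTwo_mul_C (e : A) (f : R⟦X⟧) (m : ℕ) :
    coeff m (rescaleExpandTwo e f * C e) = if 2 ∣ m then coeff (m / 2) f • e ^ (m + 1) else 0 := by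
  rw [coeff_mul_C, coeff_rescaleExpandTwo]
  split_ifs <;> simp [pow_succ]

theorem commute_C_rescaleExpandTwo (e : A) (f : R⟦X⟧) : Commute (C e) (rescaleExpandTwo e f) := by
  ext m
  rw [coeff_C_mul, coeff_mul_C, coeff_rescaleExpandTwo]
  split_ifs <;> simp [← pow_succ, ← pow_succ']

theorem commute_rescaleExpandTwo_mul_C (e : A) (f g : R⟦X⟧) :
    Commute (rescaleExpandTwo e f) (rescaleExpandTwo e g * C e) :=
  ((Commute.all f g).map _).mul_right (commute_C_rescaleExpandTwo e f).symm

theorem C_mul_sub_mul_C_rescaleExpandTwo_mul_C {e h : A} (hcomm : h * e - e * h = 2 * e)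
    (f : R⟦X⟧) :
    C h * (rescaleExpandTwo e f * C e) - rescaleExpandTwo e f * C e * C h =
      rescaleExpandTwo e (mk fun n => (4 * n + 2) * coeff n f) * C e := by
  ext m
  rw [map_sub, coeff_C_mul, coeff_mul_C _ _ h, coeff_rescaleExpandTwo_mul_C,
    coeff_rescaleExpandTwo_mul_C, coeff_mk]
  split_ifs with hm
  · obtain ⟨n, rfl⟩ := hm
    rw [mul_smul_comm, smul_mul_assoc, ← smul_sub, mul_pow_sub_pow_mul hcomm,
      Nat.mul_div_cancel_left _ two_pos, ← Nat.cast_smul_eq_nsmul R, smul_smul]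
    push_cast
    ring_nf
  · simp
end

theorem stmt_18 {A : Type*} [Ring A] [Algebra ℚ A] (e h : A)
    (hcomm : h * e - e * h = 2 * e)
    (c g : ℕ → ℚ)
    (hc : ∀ n, c n = (∏ i ∈ Finset.range n, ((1 : ℚ) / 2 - i)) / n.factorial)
    (hg : ∀ n, g n = (-1) ^ n * (2 * n).factorial /
        (4 ^ n * (n.factorial : ℚ) ^ 2 * (2 * n + 1)))
    (S H G : PowerSeries A)
    (hS : S = PowerSeries.mk fun m => if m % 2 = 0 then c (m / 2) • e ^ m else 0)
    (hH : H = S * PowerSeries.C h)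
    (hG : G = PowerSeries.mk fun m => if m % 2 = 0 then g (m / 2) • e ^ (m + 1) else 0) :
    H * G - G * H = PowerSeries.C (2 * e) := by
  set φ : ℚ⟦X⟧ →+* A⟦X⟧ := rescaleExpandTwo e
  have hS' : S = φ (PowerSeries.binomialSeries ℚ (2⁻¹ : ℚ)) := by
    ext m
    simp [hS, φ, coeff_rescaleExpandTwo, Nat.dvd_iff_mod_eq_zero, hc, Ring.choose_eq_prod_range_div]
  have hG' : G = φ (mk g) * C e := by
    ext m
    simp only [hG, φ, coeff_rescaleExpandTwo_mul_C, coeff_mk, Nat.dvd_iff_mod_eq_zero]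
  have hg' : mk (fun n => (4 * n + 2) * coeff n (mk g)) =
      2 • PowerSeries.binomialSeries ℚ (-2⁻¹ : ℚ) := by
    ext n
    rw [coeff_mk, coeff_mk, map_nsmul, binomialSeries_coeff, smul_eq_mul, mul_one, nsmul_eq_mul,
      hg, Ring.choose_neg_half]
    field_simp
    ring
  have hSG : Commute S G := hS' ▸ hG' ▸ commute_rescaleExpandTwo_mul_C e _ _
  calc H * G - G * H = S * (C h * G - G * C h) := by
        rw [hH, mul_assoc, ← mul_assoc G, ← hSG.eq, mul_assoc, mul_sub]
    _ = φ (PowerSeries.binomialSeries ℚ (2⁻¹ : ℚ) *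
          2 • PowerSeries.binomialSeries ℚ (-2⁻¹ : ℚ)) * C e := by
        rw [hS', hG', C_mul_sub_mul_C_rescaleExpandTwo_mul_C hcomm, hg', map_mul, mul_assoc]
    _ = C (2 * e) := by
        rw [mul_smul_comm, ← binomialSeries_add, add_neg_cancel, binomialSeries_zero, map_nsmul,
          map_one, smul_mul_assoc, one_mul, two_nsmul, two_mul, map_add]
end
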